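/- Non-degeneracy via comparison: suppose u solves Δu − ∂ₜu = λ₊ > 0 on {u > 0} in Q_r⁻(t_m,x_m) = (t_m − r², t_m)×B_r(x_m), u(t_m,x_m) > 0, and u is continuous. If sup over Q_r⁻(t_m,x_m) of u is at most (λ₊/(8n))·r², then with v(t,x) := λ₊·((t_m − t)/2 + |x − x_m|²/(8n)), the function u − v is a subsolution of the heat equation on {u > 0} ∩ Q_r⁻(t_m,x_m), u − v ≤ 0 on the parabolic boundary of that set, yet u(t_m,x_m) − v(t_m,x_m) > 0 — a contradiction. Hence sup_{Q_r⁻(t_m,x_m)} u > (λ₊/(8n))·r². -/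

import Mathlib

/-!
Suppose `u ≤ λ₊ r² / (8n)` on the closed cylinder and compare `u` with the barrier
`v(t, x) = λ₊ ((t_m - t)/2 + |x - x_m|² / (8n))`, for which `Δv - ∂ₜv = 3λ₊/4`. On the lateral
and bottom boundaries `v ≥ λ₊ r² / (8n) ≥ u`, while `u - v > 0` at `(t_m, x_m)`. Hence `u - v`
attains a positive maximum over the cylinder cut off at a time `t₁ < t_m` (where `u` is still
known to be `C²`), at a point where `u > 0` that is not on the parabolic boundary. There
`Δ(u - v) ≤ 0 ≤ ∂ₜ(u - v)`, so `λ₊ ≤ Δu - ∂ₜu ≤ 3λ₊/4`.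
-/

open Set Filter Topology Metric RealInnerProductSpace

/-- The parabolic operator Δu − ∂ₜu. -/
noncomputable def heatOp (n : ℕ) (u : ℝ × EuclideanSpace ℝ (Fin n) → ℝ)
    (t : ℝ) (x : EuclideanSpace ℝ (Fin n)) : ℝ :=
  (∑ i : Fin n,
    iteratedDeriv 2 (fun r : ℝ => u (t, x + r • EuclideanSpace.single i (1 : ℝ))) 0)
  - deriv (fun s : ℝ => u (s, x)) t

theorem IsLocalMaxOn.deriv_nonneg_of_Iic {f : ℝ → ℝ} {a : ℝ} (h : IsLocalMaxOn f (Iic a) a) :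
    0 ≤ deriv f a := by
  by_cases hf : DifferentiableAt ℝ f a
  · have hcone : (-1 : ℝ) ∈ posTangentConeAt (Iic a) a := by
      refine mem_posTangentConeAt_of_segment_subset fun y hy => ?_
      rw [segment_symm, segment_eq_Icc (by linarith)] at hy
      exact hy.2
    simpa using h.hasFDerivWithinAt_nonpos hf.hasDerivAt.hasFDerivAt.hasFDerivWithinAt hcone
  · rw [deriv_zero_of_not_differentiableAt hf]

theorem IsLocalMax.deriv_deriv_nonpos {f : ℝ → ℝ} {a : ℝ} (h : IsLocalMax f a)
    (hf : ContinuousAt f a) : deriv (deriv f) a ≤ 0 := by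
  by_contra! hpos
  -- by the second derivative test `a` would also be a local minimum, so `f` is locally constant
  have hconst : f =ᶠ[𝓝 a] fun _ => f a :=
    (h.and (isLocalMin_of_deriv_deriv_pos hpos h.deriv_eq_zero hf)).mono
      fun _ hx => le_antisymm hx.1 hx.2
  simp [hconst.deriv.deriv_eq] at hpos

theorem iteratedDeriv_two_quadratic (a b c x : ℝ) :
    iteratedDeriv 2 (fun s => a + b * s + c * s ^ 2) x = 2 * c := by
  have hderiv : deriv (fun s => a + b * s + c * s ^ 2) = fun s => b + 2 * c * s := by
    funext s
    exact ((((hasDerivAt_id s).const_mul b).const_add a).add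
      ((hasDerivAt_pow 2 s).const_mul c)).deriv.trans (by simp; ring)
  rw [iteratedDeriv_succ, iteratedDeriv_one, hderiv]
  exact (((hasDerivAt_id x).const_mul (2 * c)).const_add b).deriv.trans (by simp)

theorem exists_mem_Ioo_lt_of_continuousWithinAt {f : ℝ → ℝ} {a b c : ℝ} (hab : a < b)
    (hf : ContinuousWithinAt f (Ioo a b) b) (hc : c < f b) : ∃ x ∈ Ioo a b, c < f x := by
  have := right_nhdsWithin_Ioo_neBot hab
  obtain ⟨x, hx, hxI⟩ := ((hf.eventually (lt_mem_nhds hc)).and self_mem_nhdsWithin).exists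
  exact ⟨x, hxI, hx⟩

section Lines

variable {E : Type*} [NormedAddCommGroup E] [NormedSpace ℝ E] {f : ℝ × E → ℝ} {k : WithTop ℕ∞}
  {t : ℝ} {x : E}

theorem ContDiffAt.comp_timeLine (hf : ContDiffAt ℝ k f (t, x)) :
    ContDiffAt ℝ k (fun s : ℝ => f (s, x)) t :=
  hf.comp t (contDiffAt_id.prodMk contDiffAt_const)

theorem ContDiffAt.comp_spaceLine (hf : ContDiffAt ℝ k f (t, x)) (e : E) :
    ContDiffAt ℝ k (fun s : ℝ => f (t, x + s • e)) 0 := by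
  have hline : ContDiffAt ℝ k (fun s : ℝ => (t, x + s • e)) 0 := by fun_prop
  exact (by simpa using hf : ContDiffAt ℝ k f (t, x + (0 : ℝ) • e)).comp 0 hline

end Lines

section HeatOperator

variable {n : ℕ} {t : ℝ} {x : EuclideanSpace ℝ (Fin n)}

theorem heatOp_sub {u v : ℝ × EuclideanSpace ℝ (Fin n) → ℝ}
    (hu : ContDiffAt ℝ 2 u (t, x)) (hv : ContDiffAt ℝ 2 v (t, x)) :
    heatOp n (u - v) t x = heatOp n u t x - heatOp n v t x := by
  have hspace : ∀ i : Fin n,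
      iteratedDeriv 2 (fun r : ℝ => (u - v) (t, x + r • EuclideanSpace.single i (1 : ℝ))) 0 =
        iteratedDeriv 2 (fun r : ℝ => u (t, x + r • EuclideanSpace.single i (1 : ℝ))) 0 -
        iteratedDeriv 2 (fun r : ℝ => v (t, x + r • EuclideanSpace.single i (1 : ℝ))) 0 :=
    fun i => iteratedDeriv_sub (hu.comp_spaceLine _) (hv.comp_spaceLine _)
  have htime : deriv (fun s : ℝ => (u - v) (s, x)) t =
      deriv (fun s : ℝ => u (s, x)) t - deriv (fun s : ℝ => v (s, x)) t :=
    deriv_sub (hu.comp_timeLine.differentiableAt two_ne_zero)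
      (hv.comp_timeLine.differentiableAt two_ne_zero)
  simp only [heatOp, hspace, htime, Finset.sum_sub_distrib]
  ring

theorem heatOp_nonpos_of_isLocalMax {w : ℝ × EuclideanSpace ℝ (Fin n) → ℝ}
    (hw : ContinuousAt w (t, x)) (htime : IsLocalMaxOn (fun s => w (s, x)) (Iic t) t)
    (hspace : IsLocalMax (fun y => w (t, y)) x) : heatOp n w t x ≤ 0 := by
  have hline : ∀ i : Fin n,
      iteratedDeriv 2 (fun r : ℝ => w (t, x + r • EuclideanSpace.single i (1 : ℝ))) 0 ≤ 0 := by
    intro i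
    have hcont : Continuous fun r : ℝ => x + r • EuclideanSpace.single i (1 : ℝ) := by
      fun_prop
    rw [iteratedDeriv_succ, iteratedDeriv_one]
    refine IsLocalMax.deriv_deriv_nonpos ?_ ?_
    · exact IsLocalMax.comp_continuous (f := fun y => w (t, y)) (by simpa using hspace)
        hcont.continuousAt
    · exact hw.comp_of_eq (continuousAt_const.prodMk hcont.continuousAt) (by simp)
  have hsum := Finset.sum_nonpos fun i (_ : i ∈ Finset.univ) => hline i
  rw [heatOp]
  linarith [htime.deriv_nonneg_of_Iic]

theorem heatOp_le_heatOp_of_isLocalMax {u v : ℝ × EuclideanSpace ℝ (Fin n) → ℝ}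
    (hu : ContDiffAt ℝ 2 u (t, x)) (hv : ContDiffAt ℝ 2 v (t, x))
    (htime : IsLocalMaxOn (fun s => (u - v) (s, x)) (Iic t) t)
    (hspace : IsLocalMax (fun y => (u - v) (t, y)) x) : heatOp n u t x ≤ heatOp n v t x := by
  have := heatOp_nonpos_of_isLocalMax (w := u - v) (hu.sub hv).continuousAt htime hspace
  rw [heatOp_sub hu hv] at this
  linarith

theorem heatOp_le_heatOp_of_isMaxOn_cylinder {u v : ℝ × EuclideanSpace ℝ (Fin n) → ℝ}
    {a b r : ℝ} {xm : EuclideanSpace ℝ (Fin n)}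
    (hu : ContDiffAt ℝ 2 u (t, x)) (hv : ContDiffAt ℝ 2 v (t, x))
    (hmax : IsMaxOn (u - v) (Icc a b ×ˢ closedBall xm r) (t, x)) (ht : t ∈ Ioc a b)
    (hx : x ∈ ball xm r) : heatOp n u t x ≤ heatOp n v t x :=
  heatOp_le_heatOp_of_isLocalMax hu hv
    (by filter_upwards [Ioc_mem_nhdsLE ht.1] with s hs
        exact hmax ⟨⟨hs.1.le, hs.2.trans ht.2⟩, ball_subset_closedBall hx⟩)
    (by filter_upwards [isOpen_ball.mem_nhds hx] with y hy
        exact hmax ⟨Ioc_subset_Icc_self ht, ball_subset_closedBall hy⟩)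

end HeatOperator

section Barrier

variable {n : ℕ} {lp tm : ℝ} {xm : EuclideanSpace ℝ (Fin n)}

noncomputable def heatBarrier (n : ℕ) (lp tm : ℝ) (xm : EuclideanSpace ℝ (Fin n))
    (p : ℝ × EuclideanSpace ℝ (Fin n)) : ℝ :=
  lp * ((tm - p.1) / 2 + ‖p.2 - xm‖ ^ 2 / (8 * n))

theorem contDiff_heatBarrier : ContDiff ℝ 2 (heatBarrier n lp tm xm) := by
  have hnorm : ContDiff ℝ 2 fun p : ℝ × EuclideanSpace ℝ (Fin n) => ‖p.2 - xm‖ ^ 2 :=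
    (contDiff_norm_sq ℝ).comp (contDiff_snd.sub contDiff_const)
  exact contDiff_const.mul (((contDiff_const.sub contDiff_fst).div_const 2).add
    (hnorm.div_const _))

theorem heatBarrier_nonneg (hlp : 0 ≤ lp) {t : ℝ} (ht : t ≤ tm) (x : EuclideanSpace ℝ (Fin n)) :
    0 ≤ heatBarrier n lp tm xm (t, x) := by
  unfold heatBarrier
  have : 0 ≤ tm - t := sub_nonneg.2 ht
  positivity

theorem heatOp_heatBarrier (hn : n ≠ 0) (t : ℝ) (x : EuclideanSpace ℝ (Fin n)) :
    heatOp n (heatBarrier n lp tm xm) t x = 3 / 4 * lp := by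
  have hspace : ∀ i : Fin n, iteratedDeriv 2
      (fun r : ℝ => heatBarrier n lp tm xm (t, x + r • EuclideanSpace.single i (1 : ℝ))) 0 =
        2 * (lp / (8 * n)) := by
    intro i
    set e := EuclideanSpace.single i (1 : ℝ)
    have he : ‖e‖ = 1 := by simp [e]
    have hquad : (fun r : ℝ => heatBarrier n lp tm xm (t, x + r • e)) = fun r =>
        lp * ((tm - t) / 2 + ‖x - xm‖ ^ 2 / (8 * n)) + lp * (2 * ⟪x - xm, e⟫) / (8 * n) * r +
          lp / (8 * n) * r ^ 2 := by
      funext r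
      rw [heatBarrier, show x + r • e - xm = (x - xm) + r • e by abel, norm_add_sq_real,
        real_inner_smul_right, norm_smul, he, Real.norm_eq_abs, mul_one, sq_abs]
      ring
    rw [hquad, iteratedDeriv_two_quadratic]
  have htime : deriv (fun s : ℝ => heatBarrier n lp tm xm (s, x)) t = -(lp / 2) := by
    have : HasDerivAt (fun s : ℝ => heatBarrier n lp tm xm (s, x)) (lp * (-1 / 2)) t := by
      simp only [heatBarrier]
      exact ((((hasDerivAt_id t).const_sub tm).div_const 2).add_const _).const_mul lp
    rw [this.deriv]
    ring
  have hn' : (n : ℝ) ≠ 0 := Nat.cast_ne_zero.2 hn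
  simp only [heatOp, hspace, htime, Finset.sum_const, Finset.card_univ, Fintype.card_fin,
    nsmul_eq_mul]
  field_simp
  ring

theorem mem_cylinder_of_heatBarrier_lt (hn : 0 < n) (hlp : 0 ≤ lp) {r t : ℝ} (hr : 0 ≤ r)
    (ht : t ≤ tm) {x : EuclideanSpace ℝ (Fin n)}
    (h : heatBarrier n lp tm xm (t, x) < lp / (8 * n) * r ^ 2) :
    tm - r ^ 2 < t ∧ x ∈ ball xm r := by
  have hn' : (1 : ℝ) ≤ n := Nat.one_le_cast.2 hn
  have hC : lp / (8 * n) * r ^ 2 = lp * (r ^ 2 / (8 * n)) := by ring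
  rw [heatBarrier, hC] at h
  have hspace : 0 ≤ ‖x - xm‖ ^ 2 / (8 * n) := by positivity
  refine ⟨lt_of_not_ge fun hbot => h.not_ge (mul_le_mul_of_nonneg_left ?_ hlp),
    mem_ball_iff_norm.2 (lt_of_not_ge fun hlat => h.not_ge (mul_le_mul_of_nonneg_left ?_ hlp))⟩
  · have : r ^ 2 / (8 * n) ≤ r ^ 2 / 2 :=
      div_le_div_of_nonneg_left (sq_nonneg r) two_pos (by linarith)
    linarith
  · have : r ^ 2 / (8 * n) ≤ ‖x - xm‖ ^ 2 / (8 * n) := by gcongr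
    linarith [sub_nonneg.2 ht]

end Barrier

/-- Non-degeneracy. If u is continuous on the closure of
Q_r⁻(t_m,x_m) = (t_m−r²,t_m)×B_r(x_m), u(t_m,x_m) > 0, and Δu − ∂ₜu ≥ λ₊ on
{u > 0} ∩ Q_r⁻(t_m,x_m), then sup_{Q_r⁻(t_m,x_m)} u > (λ₊/(8n))·r². -/
theorem stmt_14 (n : ℕ) (hn : 0 < n) (r lp : ℝ) (hr : 0 < r) (hlp : 0 < lp)
    (tm : ℝ) (xm : EuclideanSpace ℝ (Fin n))
    (u : ℝ × EuclideanSpace ℝ (Fin n) → ℝ)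
    (hcont : ContinuousOn u (closure (Set.Ioo (tm - r ^ 2) tm ×ˢ Metric.ball xm r)))
    (hpos : 0 < u (tm, xm))
    (hreg : ∀ p ∈ Set.Ioo (tm - r ^ 2) tm ×ˢ Metric.ball xm r,
      0 < u p → ContDiffAt ℝ 2 u p)
    (heq : ∀ t : ℝ, ∀ x : EuclideanSpace ℝ (Fin n),
      (t, x) ∈ Set.Ioo (tm - r ^ 2) tm ×ˢ Metric.ball xm r →
        0 < u (t, x) → lp ≤ heatOp n u t x) :
    ∃ p ∈ closure (Set.Ioo (tm - r ^ 2) tm ×ˢ Metric.ball xm r),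
      lp / (8 * n) * r ^ 2 < u p := by
  by_contra! hsmall
  set Q := Ioo (tm - r ^ 2) tm ×ˢ ball xm r
  set v := heatBarrier n lp tm xm
  have hv : ContDiff ℝ 2 v := contDiff_heatBarrier
  have hclosure : closure Q = Icc (tm - r ^ 2) tm ×ˢ closedBall xm r := by
    rw [closure_prod_eq, closure_Ioo (by nlinarith), closure_ball xm hr.ne']
  have hw : ContinuousOn (u - v) (closure Q) := hcont.sub hv.continuous.continuousOn
  obtain ⟨t₁, ht₁, hvu₁⟩ : ∃ t₁ ∈ Ioo (tm - r ^ 2) tm, 0 < (u - v) (t₁, xm) := by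
    refine exists_mem_Ioo_lt_of_continuousWithinAt (by nlinarith)
      ((hw _ ?_).comp (continuous_id.prodMk continuous_const).continuousWithinAt fun s hs => ?_)
      (by simpa [v, heatBarrier] using hpos) <;> rw [hclosure]
    · exact ⟨right_mem_Icc.2 (by nlinarith), mem_closedBall_self hr.le⟩
    · exact ⟨Ioo_subset_Icc_self hs, mem_closedBall_self hr.le⟩
  set S := Icc (tm - r ^ 2) t₁ ×ˢ closedBall xm r
  have hSQ : S ⊆ closure Q := by
    rw [hclosure]; exact prod_mono (Icc_subset_Icc_right ht₁.2.le) subset_rfl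
  have ht₁S : (t₁, xm) ∈ S := ⟨⟨ht₁.1.le, le_rfl⟩, mem_closedBall_self hr.le⟩
  obtain ⟨⟨t₀, x₀⟩, hp₀S, hmax⟩ :=
    (isCompact_Icc.prod (isCompact_closedBall xm r)).exists_isMaxOn ⟨_, ht₁S⟩ (hw.mono hSQ)
  have hvu : v (t₀, x₀) < u (t₀, x₀) := sub_pos.1 (hvu₁.trans_le (hmax ht₁S))
  obtain ⟨ht₀, hx₀⟩ := mem_cylinder_of_heatBarrier_lt hn hlp.le hr.le
    (hp₀S.1.2.trans ht₁.2.le) (hvu.trans_le (hsmall _ (hSQ hp₀S)))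
  have hQ : (t₀, x₀) ∈ Q := ⟨⟨ht₀, hp₀S.1.2.trans_lt ht₁.2⟩, hx₀⟩
  have hupos : 0 < u (t₀, x₀) :=
    (heatBarrier_nonneg hlp.le (hp₀S.1.2.trans ht₁.2.le) x₀).trans_lt hvu
  have hcompare := heatOp_le_heatOp_of_isMaxOn_cylinder (hreg _ hQ hupos) hv.contDiffAt hmax
    ⟨ht₀, hp₀S.1.2⟩ hx₀
  rw [heatOp_heatBarrier hn.ne'] at hcompare
  linarith [heq t₀ x₀ hQ hupos]
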